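/- Consider the filter ω'(t) = −C_d·C_f·ω(t) + C_f·K(ω(t))·v(t), where C_d, C_f > 0, v : [t₀,∞) → ℝ is continuous and bounded, K : ℝ → ℝ is continuous with K(x) → 0 as |x| → B_ω, K(0) = 1, and K(x)·v(t) bounded. If ω(t₀) = 0, then |ω(t)| < B_ω for all t ≥ t₀. -/

import Mathlib

/-!
Since `K x → 0` as `x → B⁻` while `v` is bounded, the drift `-C_d C_f x + C_f K(x) v(t)` is
negative, uniformly in `t`, at some level `c < B` lying above `ω(t₀)`. A solution starting below
such a level can never cross it upwards, so `ω < B`; applying the same argument to `-ω`, which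
solves the equation for `x ↦ K (-x)` and `-v`, gives `-ω < B`.
-/

open Set Filter Topology

theorem le_of_hasDerivAt_neg_at_level {f f' : ℝ → ℝ} {t₀ c : ℝ}
    (hf : ∀ t, t₀ ≤ t → HasDerivAt f (f' t) t) (h₀ : f t₀ ≤ c)
    (hlevel : ∀ t, t₀ ≤ t → f t = c → f' t < 0) :
    ∀ t, t₀ ≤ t → f t ≤ c := fun _ ht =>
  image_le_of_deriv_right_lt_deriv_boundary'
    (fun x hx => (hf x hx.1).continuousAt.continuousWithinAt)
    (fun x hx => (hf x hx.1).hasDerivWithinAt) h₀ continuousOn_const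
    (fun _ _ => hasDerivWithinAt_const _ _ _)
    (fun x hx hfx => hlevel x hx.1 hfx) ⟨ht, le_rfl⟩

theorem exists_level_drift_neg {Cd Cf B a t₀ : ℝ} {v K : ℝ → ℝ}
    (hCd : 0 < Cd) (hCf : 0 < Cf) (hB : 0 < B) (ha : a < B)
    (hv_bdd : ∃ Mv, ∀ t, t₀ ≤ t → |v t| ≤ Mv) (hK : Tendsto K (𝓝[<] B) (𝓝 0)) :
    ∃ c ∈ Ioo a B, ∀ t, t₀ ≤ t → -Cd * Cf * c + Cf * K c * v t < 0 := by
  obtain ⟨Mv, hMv⟩ := hv_bdd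
  have hlim : Tendsto (fun x => Cd * x - |K x| * Mv) (𝓝[<] B) (𝓝 (Cd * B - |0| * Mv)) :=
    ((tendsto_nhdsWithin_of_tendsto_nhds tendsto_id).const_mul Cd).sub
      (hK.abs.mul_const Mv)
  have hpos : ∀ᶠ x in 𝓝[<] B, 0 < Cd * x - |K x| * Mv :=
    hlim.eventually_const_lt (by simpa using mul_pos hCd hB)
  obtain ⟨c, hc, hc_above⟩ := (hpos.and (Ioo_mem_nhdsLT ha)).exists
  refine ⟨c, hc_above, fun t ht => ?_⟩
  have hKv : K c * v t < Cd * c := calc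
    K c * v t ≤ |K c| * |v t| := (le_abs_self _).trans (abs_mul _ _).le
    _ ≤ |K c| * Mv := mul_le_mul_of_nonneg_left (hMv t ht) (abs_nonneg _)
    _ < Cd * c := by linarith
  linarith [mul_lt_mul_of_pos_left hKv hCf]

theorem lt_of_hasDerivAt_drift {Cd Cf B t₀ : ℝ} {ω v K : ℝ → ℝ}
    (hCd : 0 < Cd) (hCf : 0 < Cf) (hB : 0 < B)
    (hv_bdd : ∃ Mv, ∀ t, t₀ ≤ t → |v t| ≤ Mv) (hK : Tendsto K (𝓝[<] B) (𝓝 0))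
    (hode : ∀ t, t₀ ≤ t → HasDerivAt ω (-Cd * Cf * ω t + Cf * K (ω t) * v t) t)
    (h₀ : ω t₀ < B) :
    ∀ t, t₀ ≤ t → ω t < B := by
  obtain ⟨c, ⟨hc_start, hc_lt⟩, hdrift⟩ := exists_level_drift_neg hCd hCf hB h₀ hv_bdd hK
  have hbelow := le_of_hasDerivAt_neg_at_level hode hc_start.le
    (fun t ht hωt => hωt ▸ hdrift t ht)
  exact fun t ht => (hbelow t ht).trans_lt hc_lt

theorem stmt_8_general (Cd Cf Bω t₀ : ℝ) (hCd : 0 < Cd) (hCf : 0 < Cf) (hB : 0 < Bω)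
    (ω v K : ℝ → ℝ)
    (hv_bdd : ∃ Mv, ∀ t, t₀ ≤ t → |v t| ≤ Mv)
    (hK_lim_pos : Filter.Tendsto K (nhdsWithin Bω (Set.Iio Bω)) (nhds 0))
    (hK_lim_neg : Filter.Tendsto K (nhdsWithin (-Bω) (Set.Ioi (-Bω))) (nhds 0))
    (hode : ∀ t, t₀ ≤ t →
      HasDerivAt ω (-Cd * Cf * ω t + Cf * K (ω t) * v t) t)
    (h0 : ω t₀ = 0) :
    ∀ t, t₀ ≤ t → |ω t| < Bω := by
  have hup := lt_of_hasDerivAt_drift hCd hCf hB hv_bdd hK_lim_pos hode (by rwa [h0])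
  have hv_neg_bdd : ∃ Mv, ∀ t, t₀ ≤ t → |-v t| ≤ Mv := by
    simpa only [abs_neg] using hv_bdd
  have hode_neg : ∀ t, t₀ ≤ t → HasDerivAt (fun t => -ω t)
      (-Cd * Cf * (-ω t) + Cf * K (-(-ω t)) * (-v t)) t := fun t ht =>
    (hode t ht).neg.congr_deriv (by rw [neg_neg]; ring)
  have hdown := lt_of_hasDerivAt_drift hCd hCf hB hv_neg_bdd
    (hK_lim_neg.comp tendsto_neg_nhdsLT) hode_neg (by rwa [h0, neg_zero])
  exact fun t ht => abs_lt.mpr ⟨neg_lt.mp (hdown t ht), hup t ht⟩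

theorem stmt_8 (Cd Cf Bω t₀ : ℝ) (hCd : 0 < Cd) (hCf : 0 < Cf) (hB : 0 < Bω)
    (ω v K : ℝ → ℝ)
    (hv_cont : ContinuousOn v (Set.Ici t₀)) (hv_bdd : ∃ Mv, ∀ t, t₀ ≤ t → |v t| ≤ Mv)
    (hK_cont : Continuous K) (hK0 : K 0 = 1)
    (hK_lim_pos : Filter.Tendsto K (nhdsWithin Bω (Set.Iio Bω)) (nhds 0))
    (hK_lim_neg : Filter.Tendsto K (nhdsWithin (-Bω) (Set.Ioi (-Bω))) (nhds 0))
    (hKv_bdd : ∃ M, ∀ x t, t₀ ≤ t → |K x * v t| ≤ M)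
    (hode : ∀ t, t₀ ≤ t →
      HasDerivAt ω (-Cd * Cf * ω t + Cf * K (ω t) * v t) t)
    (h0 : ω t₀ = 0) :
    ∀ t, t₀ ≤ t → |ω t| < Bω :=
  stmt_8_general Cd Cf Bω t₀ hCd hCf hB ω v K hv_bdd hK_lim_pos hK_lim_neg hode h0
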